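/- arXiv:1407.0592 — 4 statements merged into one kernel-verified Lean document; each statement's English description precedes it below -/
import Mathlib

section
/- Let x₁, …, x_r be finitely many integers. Then there exist infinitely many prime numbers ℓ such that every x_i is a quadratic residue modulo ℓ, i.e., for each i there exists an integer y with y² ≡ x_i (mod ℓ). -/
/-! By quadratic reciprocity, `J(a | ℓ)` depends only on `ℓ mod 4|a|`, so every prime
`ℓ ≡ 1 mod 4 ∏ |xᵢ|` (product over the nonzero `xᵢ`) has `J(xᵢ | ℓ) = J(xᵢ | 1) = 1`, making each
`xᵢ` a square mod `ℓ`. There are infinitely many primes `≡ 1` modulo any fixed positive integer. -/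

theorem jacobiSym.eq_one_of_modEq_one (a : ℤ) {b : ℕ} (hb : b ≡ 1 [MOD 4 * a.natAbs]) :
    jacobiSym a b = 1 := by
  have hb_odd : Odd b := by
    have hb4 : b % 4 = 1 := hb.of_mul_right a.natAbs
    exact Nat.odd_iff.mpr (by omega)
  calc jacobiSym a b = jacobiSym a (1 % (4 * a.natAbs)) := by rw [jacobiSym.mod_right a hb_odd, hb]
    _ = jacobiSym a 1 := (jacobiSym.mod_right a odd_one).symm
    _ = 1 := jacobiSym.one_right a

theorem ZMod.isSquare_intCast_of_modEq_one {ℓ : ℕ} [Fact ℓ.Prime] {a : ℤ}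
    (hℓ : ℓ ≡ 1 [MOD 4 * a.natAbs]) : IsSquare (a : ZMod ℓ) :=
  ZMod.isSquare_of_jacobiSym_eq_one (jacobiSym.eq_one_of_modEq_one a hℓ)

theorem ZMod.exists_sq_sub_dvd_of_isSquare_intCast {n : ℕ} {a : ℤ} (h : IsSquare (a : ZMod n)) :
    ∃ y : ℤ, (n : ℤ) ∣ y ^ 2 - a := by
  obtain ⟨c, hc⟩ := h
  obtain ⟨y, rfl⟩ := ZMod.intCast_surjective c
  refine ⟨y, (ZMod.intCast_zmod_eq_zero_iff_dvd _ n).mp ?_⟩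
  push_cast
  rw [hc, sq, sub_self]

/-- Given finitely many integers `x₁, …, x_r`, there are infinitely many
prime numbers `ℓ` such that every `x_i` is a quadratic residue modulo `ℓ`. -/
theorem infinitely_many_primes_with_all_quadratic_residues
    (r : ℕ) (x : Fin r → ℤ) :
    {ℓ : ℕ | ℓ.Prime ∧ ∀ i : Fin r, ∃ y : ℤ, (ℓ : ℤ) ∣ y ^ 2 - x i}.Infinite := by
  set N : ℕ := 4 * ∏ i ∈ Finset.univ.filter (x · ≠ 0), (x i).natAbs
  have hN : N ≠ 0 := mul_ne_zero four_ne_zero <| Finset.prod_ne_zero_iff.mpr fun i hi ↦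
    Int.natAbs_ne_zero.mpr (Finset.mem_filter.mp hi).2
  refine (Nat.infinite_setOfPred_prime_modEq_one hN).mono ?_
  rintro ℓ ⟨hℓ, hℓN⟩
  have : Fact ℓ.Prime := ⟨hℓ⟩
  refine ⟨hℓ, fun i ↦ ?_⟩
  by_cases hxi : x i = 0
  · exact ⟨0, by simp [hxi]⟩
  have hdvd : 4 * (x i).natAbs ∣ N :=
    mul_dvd_mul_left 4 (Finset.dvd_prod_of_mem _ (Finset.mem_filter.mpr ⟨Finset.mem_univ i, hxi⟩))
  exact ZMod.exists_sq_sub_dvd_of_isSquare_intCast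
    (ZMod.isSquare_intCast_of_modEq_one (hℓN.of_dvd hdvd))
end

section
/- Let d and t be positive integers, let m be a positive integer with m ≡ 1 (mod 4dt), and let y₀ be an integer coprime to m. Assume that −d and t are both squares modulo m. Then there exists an integer λ such that (i) gcd(λ, 2mt) = 1, (ii) λ ≡ 1 (mod 4dt), and (iii) λ²·(m·d + t·y₀²·(m−1)) ≡ d (mod 4mdt). -/
private lemma isCoprime_of_modEq {a b n : ℤ} (h : a ≡ b [ZMOD n]) (hb : IsCoprime b n) :
    IsCoprime a n := by
  obtain ⟨k, hk⟩ := h.dvd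
  obtain ⟨s, r, hsr⟩ := hb
  exact ⟨s, r + s * k, by linear_combination hsr - s * hk⟩

/-- Let `d, t` be positive integers, `m` a positive integer with
`m ≡ 1 (mod 4dt)`, and `y₀` an integer coprime to `m`. If `-d` and `t` are both squares
modulo `m`, then there is an integer `λ` coprime to `2mt`, congruent to `1` modulo `4dt`,
such that `λ² (md + t y₀² (m-1)) ≡ d (mod 4mdt)`. -/
theorem exists_lambda_congruence
    (d t m y₀ : ℤ) (hd : 0 < d) (ht : 0 < t) (hm : 0 < m)
    (hm1 : m ≡ 1 [ZMOD 4 * d * t])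
    (hy₀ : IsCoprime y₀ m)
    (hnegd : ∃ y : ℤ, m ∣ y ^ 2 - (-d))
    (ht' : ∃ y : ℤ, m ∣ y ^ 2 - t) :
    ∃ lam : ℤ, IsCoprime lam (2 * m * t) ∧ lam ≡ 1 [ZMOD 4 * d * t] ∧
      lam ^ 2 * (m * d + t * y₀ ^ 2 * (m - 1)) ≡ d [ZMOD 4 * m * d * t] := by
  obtain ⟨y₁, hy₁⟩ := hnegd
  obtain ⟨y₂, hy₂⟩ := ht'
  -- m is coprime to 4*d*t
  obtain ⟨c, hc⟩ := hm1.dvd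
  have copm : IsCoprime m (4 * d * t) := ⟨1, c, by linear_combination -hc⟩
  have coptm : IsCoprime t m := ((copm.symm).of_mul_left_right)
  have copdm : IsCoprime d m := ((copm.symm).of_mul_left_left).of_mul_left_right
  -- y₂² ≡ t mod m, so y₂ is coprime to m
  have h3 : y₂ ^ 2 ≡ t [ZMOD m] := (Int.modEq_iff_dvd.mpr hy₂).symm
  have copy₂ : IsCoprime y₂ m :=
    (IsCoprime.pow_left_iff two_pos).mp (isCoprime_of_modEq h3 coptm)
  -- y₁² ≡ -d mod m, so y₁ is coprime to m
  have h2 : y₁ ^ 2 ≡ -d [ZMOD m] := (Int.modEq_iff_dvd.mpr hy₁).symm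
  have copy₁ : IsCoprime y₁ m :=
    (IsCoprime.pow_left_iff two_pos).mp (isCoprime_of_modEq h2 copdm.neg_left)
  -- u : inverse of y₂*y₀ mod m
  obtain ⟨u, b0, hu⟩ := (copy₂.mul_left hy₀)
  have h4 : u * (y₂ * y₀) ≡ 1 [ZMOD m] := Int.modEq_iff_dvd.mpr ⟨b0, by linear_combination - hu⟩
  have copu : IsCoprime u m := ⟨y₂ * y₀, b0, by linear_combination hu⟩
  -- CRT construction
  obtain ⟨p, q, hpq⟩ := copm
  set lam : ℤ := (y₁ * u) * q * (4 * d * t) + p * m with hlam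
  have hlam_m : lam ≡ y₁ * u [ZMOD m] :=
    Int.modEq_iff_dvd.mpr ⟨p * (y₁ * u) - p, by linear_combination -(y₁ * u) * hpq⟩
  have hlam_4 : lam ≡ 1 [ZMOD 4 * d * t] :=
    Int.modEq_iff_dvd.mpr ⟨q * (1 - y₁ * u), by linear_combination -hpq⟩
  refine ⟨lam, ?_, hlam_4, ?_⟩
  · -- coprimality with 2*m*t
    obtain ⟨c2, hc2⟩ := hlam_4.dvd
    have cop2 : IsCoprime lam 2 := ⟨1, 2 * d * t * c2, by linear_combination -hc2⟩
    have copt : IsCoprime lam t := ⟨1, 4 * d * c2, by linear_combination -hc2⟩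
    have copml : IsCoprime lam m := isCoprime_of_modEq hlam_m (copy₁.mul_left copu)
    exact (cop2.mul_right copml).mul_right copt
  · -- the main congruence
    set E : ℤ := m * d + t * y₀ ^ 2 * (m - 1) with hE
    have h1 : E ≡ -(t * y₀ ^ 2) [ZMOD m] :=
      Int.modEq_iff_dvd.mpr ⟨-(d + t * y₀ ^ 2), by ring⟩
    have finalm : lam ^ 2 * E ≡ d [ZMOD m] := by
      calc lam ^ 2 * E ≡ (y₁ * u) ^ 2 * E [ZMOD m] := (hlam_m.pow 2).mul_right E
        _ = (y₁ ^ 2) * (u ^ 2 * E) := by ring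
        _ ≡ (-d) * (u ^ 2 * -(t * y₀ ^ 2)) [ZMOD m] := h2.mul ((Int.ModEq.refl _).mul h1)
        _ = (d * y₀ ^ 2 * u ^ 2) * t := by ring
        _ ≡ (d * y₀ ^ 2 * u ^ 2) * (y₂ ^ 2) [ZMOD m] := (Int.ModEq.refl _).mul h3.symm
        _ = d * (u * (y₂ * y₀)) ^ 2 := by ring
        _ ≡ d * 1 ^ 2 [ZMOD m] := (Int.ModEq.refl _).mul (h4.pow 2)
        _ = d := by ring
    have final4 : lam ^ 2 * E ≡ d [ZMOD 4 * d * t] := by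
      calc lam ^ 2 * E ≡ 1 ^ 2 * (1 * d + t * y₀ ^ 2 * (1 - 1)) [ZMOD 4 * d * t] :=
            (hlam_4.pow 2).mul ((hm1.mul_right d).add ((Int.ModEq.refl _).mul (hm1.sub_right 1)))
        _ = d := by ring
    have hco : Nat.Coprime m.natAbs (4 * d * t).natAbs :=
      Int.isCoprime_iff_gcd_eq_one.mp ⟨p, q, hpq⟩
    have hcomb := (Int.modEq_and_modEq_iff_modEq_mul hco).mp ⟨finalm, final4⟩
    have hmm : m * (4 * d * t) = 4 * m * d * t := by ring
    rwa [hmm] at hcomb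
end

section
/- Let d be a positive integer and let n be an odd positive integer. Then there exist vectors v, w ∈ Λ_{2d} such that B_d(v,v) = 2 and B_d(v,w) = 1, the restriction of B_d to the ℤ-span of v and w is positive definite, and there exists l in the ℤ-span of v and w with B_d(l,v) = 0, B_d(l,l) > 0, and gcd(B_d(l,l), n) = 1. -/
/-- The lattice `Λ_{2n} = ⟨2n⟩ ⊕ U`: the free `ℤ`-module `ℤ³` with the symmetric bilinear
form `B_n((x₁,x₂,x₃),(y₁,y₂,y₃)) = 2n·x₁y₁ + x₂y₃ + x₃y₂`. -/
def lambdaForm (n : ℕ) (x y : Fin 3 → ℤ) : ℤ :=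
  2 * (n : ℤ) * x 0 * y 0 + x 1 * y 2 + x 2 * y 1

/-- For any positive integer `d` and odd positive integer `n`, there exist
`v, w ∈ Λ_{2d}` with `B_d(v,v) = 2`, `B_d(v,w) = 1`, such that `B_d` is positive definite on
the `ℤ`-span of `v` and `w`, and such that this span contains a vector `l` with
`B_d(l,v) = 0`, `B_d(l,l) > 0` and `gcd(B_d(l,l), n) = 1`. -/
theorem exists_rank_two_posdef_sublattice
    (d n : ℕ) (hd : 0 < d) (hn : 0 < n) (hodd : Odd n) :
    ∃ v w : Fin 3 → ℤ,
      lambdaForm d v v = 2 ∧ lambdaForm d v w = 1 ∧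
      (∀ x ∈ Submodule.span ℤ ({v, w} : Set (Fin 3 → ℤ)), x ≠ 0 → 0 < lambdaForm d x x) ∧
      ∃ l ∈ Submodule.span ℤ ({v, w} : Set (Fin 3 → ℤ)),
        lambdaForm d l v = 0 ∧ 0 < lambdaForm d l l ∧
        Int.gcd (lambdaForm d l l) (n : ℤ) = 1 := by
  have hd1 : (1 : ℤ) ≤ (d : ℤ) := by exact_mod_cast hd
  have hn1 : (1 : ℤ) ≤ (n : ℤ) := by exact_mod_cast hn
  refine ⟨![0, 1, 1], ![(n : ℤ), 1, 0], ?_, ?_, ?_, ?_⟩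
  · simp [lambdaForm]
  · simp [lambdaForm]
  · intro x hx hx0
    rw [Submodule.mem_span_pair] at hx
    obtain ⟨a, b, hab⟩ := hx
    have hx0' : a•(![0, 1, 1] : Fin 3 → ℤ) + b•![(n : ℤ), 1, 0] ≠ 0 := by rw [hab]; exact hx0
    have hab0 : ¬ (a = 0 ∧ b = 0) := by
      rintro ⟨rfl, rfl⟩
      simp at hx0'
    have hval : lambdaForm d x x = 2*(d:ℤ)*n^2*b^2 + 2*a^2 + 2*a*b := by
      rw [← hab]
      simp [lambdaForm]
      ring
    rw [hval]
    rcases eq_or_ne b 0 with rfl | hb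
    · have ha : a ≠ 0 := by tauto
      have ha2 : 0 < a^2 := by positivity
      nlinarith
    · have hb2 : 0 < b^2 := by positivity
      have hb1 : 1 ≤ b^2 := hb2
      have hdn : (1:ℤ) ≤ (d:ℤ)*(n:ℤ)^2 := by nlinarith
      have hX : b^2 ≤ (d:ℤ)*(n:ℤ)^2*b^2 := by
        calc b^2 = 1*b^2 := by ring
        _ ≤ (d:ℤ)*(n:ℤ)^2*b^2 := by
          exact mul_le_mul_of_nonneg_right hdn (sq_nonneg b)
      nlinarith [sq_nonneg (2*a + b)]
  · refine ⟨![-2*(n:ℤ), -1, 1], ?_, ?_, ?_, ?_⟩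
    · rw [Submodule.mem_span_pair]
      refine ⟨1, -2, ?_⟩
      funext i
      fin_cases i <;> simp
    · simp [lambdaForm]
    · have : lambdaForm d ![-2*(n:ℤ), -1, 1] ![-2*(n:ℤ), -1, 1] = 8*(d:ℤ)*n^2 - 2 := by
        simp [lambdaForm]; ring
      rw [this]
      nlinarith
    · have hval : lambdaForm d ![-2*(n:ℤ), -1, 1] ![-2*(n:ℤ), -1, 1] = 8*(d:ℤ)*n^2 - 2 := by
        simp [lambdaForm]; ring
      rw [hval]
      obtain ⟨k, hk⟩ := hodd
      have hk' : (n : ℤ) = 2*k + 1 := by exact_mod_cast hk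
      have hcop : IsCoprime (8*(d:ℤ)*n^2 - 2) (n : ℤ) := by
        refine ⟨(k : ℤ), 1 - 8*(d:ℤ)*k*n, ?_⟩
        rw [hk']; ring
      exact Int.isCoprime_iff_gcd_eq_one.mp hcop
end

section
/- Let M be a free ℤ-module of finite rank s equipped with a symmetric ℤ-bilinear form b with nonzero discriminant, let α ∈ M, and let r be a positive integer. Equip the free ℤ-module ℤ ⊕ M ⊕ ℤ with the symmetric bilinear form ⟨(a,x,c),(a',x',c')⟩ = b(x,x') − a·c' − a'·c. Let N be the ℤ-submodule of ℤ ⊕ M ⊕ ℤ generated by (r, α, 0), (0, 0, 1), and the elements (0, x, 0) for x ∈ M. Then N is free of rank s + 2 and |disc(N)| = r² · |disc(M)|. -/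
/-!
For `r ≠ 0` the map `((a, c), x) ↦ (r a, a α + x, c)` is an isomorphism `ℤ² ⊕ M ≅ N^{α/r}`, so
`N^{α/r}` has the basis `(r, α, 0), (0, 0, 1), (0, eᵢ, 0)`. In this basis the Mukai Gram matrix
has second row `(-r, 0, …, 0)` and second column `(-r, 0, …, 0)ᵀ`, which forces its determinant
to be `-r² · disc(M)`.
-/

/-- The Mukai pairing on `ℤ ⊕ M ⊕ ℤ` associated to a symmetric bilinear form `b` on `M`:
`⟨(a,x,c),(a',x',c')⟩ = b(x,x') − a·c' − a'·c`. -/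
def mukaiPairing {M : Type*} [AddCommGroup M] [Module ℤ M]
    (b : M →ₗ[ℤ] M →ₗ[ℤ] ℤ) (p q : ℤ × M × ℤ) : ℤ :=
  b p.2.1 q.2.1 - p.1 * q.2.2 - q.1 * p.2.2

/-- The lattice of twisted Mukai vectors `N^{α/r}`: the `ℤ`-submodule of `ℤ ⊕ M ⊕ ℤ`
generated by `(r, α, 0)`, `(0, 0, 1)` and the elements `(0, x, 0)` for `x ∈ M`. -/
def twistedMukaiLattice {M : Type*} [AddCommGroup M] [Module ℤ M]
    (α : M) (r : ℕ) : Submodule ℤ (ℤ × M × ℤ) :=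
  Submodule.span ℤ
    ({((r : ℤ), α, (0 : ℤ)), ((0 : ℤ), (0 : M), (1 : ℤ))} ∪
      Set.range (fun x : M => ((0 : ℤ), x, (0 : ℤ))))

open Matrix

theorem Matrix.det_fromBlocks_of_corner_eq_zero {R n : Type*} [CommRing R] [Fintype n]
    [DecidableEq n] (x a c : R) (β γ : n → R) (D : Matrix n n R) :
    (fromBlocks !![x, a; c, 0] (of ![β, 0]) (of fun i => ![γ i, 0]) D).det
      = -(a * c) * D.det := by
  -- Split row `inl 0` as `(0, a, 0) + (x, 0, β)`: the second summand leaves column `inl 1`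
  -- zero, the first makes the matrix block triangular.
  set G := fromBlocks !![x, a; c, 0] (of ![β, 0]) (of fun i => ![γ i, 0]) D
  have hrow : G (.inl 0) = Sum.elim ![0, a] 0 + Sum.elim ![x, 0] β := by
    ext (k | j)
    · fin_cases k <;> simp [G]
    · simp [G]
  rw [← updateRow_eq_self G (.inl 0), hrow, det_updateRow_add]
  have hsplit : G.updateRow (.inl 0) (Sum.elim ![0, a] 0)
      = fromBlocks !![0, a; c, 0] 0 (of fun i => ![γ i, 0]) D := by
    ext (k | i) (l | j)
    · fin_cases k <;> fin_cases l <;> simp [G]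
    · fin_cases k <;> simp [G]
    · simp [G]
    · simp [G]
  have hzero : (G.updateRow (.inl 0) (Sum.elim ![x, 0] β)).det = 0 :=
    det_eq_zero_of_column_eq_zero (.inl 1) fun
      | .inl k => by fin_cases k <;> simp [G]
      | .inr i => by simp [G]
  rw [hsplit, hzero, det_fromBlocks_zero₁₂, det_fin_two_of]
  ring

section
variable {M : Type*} [AddCommGroup M]

def twistedMukaiMap (α : M) (r : ℕ) : (ℤ × ℤ) × M →+ ℤ × M × ℤ :=
  AddMonoidHom.mk' (fun p => (r * p.1.1, p.1.1 • α + p.2, p.1.2)) fun p q => by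
    ext
    · exact mul_add _ _ _
    · simp only [Prod.fst_add, Prod.snd_add, add_zsmul]; abel
    · rfl

theorem twistedMukaiMap_injective (α : M) {r : ℕ} (hr : r ≠ 0) :
    Function.Injective (twistedMukaiMap α r) := by
  rintro ⟨⟨a, c⟩, x⟩ ⟨⟨a', c'⟩, x'⟩ h
  simp only [twistedMukaiMap, AddMonoidHom.mk'_apply, Prod.mk.injEq] at h
  obtain ⟨ha, hx, rfl⟩ := h
  obtain rfl : a = a' := mul_left_cancel₀ (by exact_mod_cast hr) ha
  obtain rfl := add_left_cancel hx
  rfl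

variable [Module ℤ M]

theorem range_twistedMukaiMap (α : M) (r : ℕ) :
    LinearMap.range (twistedMukaiMap α r).toIntLinearMap = twistedMukaiLattice α r := by
  apply le_antisymm
  · rintro _ ⟨⟨⟨a, c⟩, x⟩, rfl⟩
    have hdecomp : twistedMukaiMap α r ((a, c), x)
        = a • ((r : ℤ), α, (0 : ℤ)) + c • ((0 : ℤ), (0 : M), (1 : ℤ)) + ((0 : ℤ), x, (0 : ℤ)) := by
      ext <;> simp [twistedMukaiMap, mul_comm, zsmul_zero]
    rw [AddMonoidHom.coe_toIntLinearMap, hdecomp]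
    refine add_mem (add_mem (Submodule.smul_mem _ _ ?_) (Submodule.smul_mem _ _ ?_)) ?_ <;>
      apply Submodule.subset_span
    · exact .inl (.inl rfl)
    · exact .inl (.inr rfl)
    · exact .inr ⟨x, rfl⟩
  · rw [twistedMukaiLattice, Submodule.span_le]
    rintro _ ((rfl | rfl) | ⟨x, rfl⟩)
    · exact ⟨((1, 0), 0), by simp [twistedMukaiMap]⟩
    · exact ⟨((0, 1), 0), by simp [twistedMukaiMap]⟩
    · exact ⟨((0, 0), x), by simp [twistedMukaiMap]⟩

noncomputable def twistedMukaiEquiv (α : M) {r : ℕ} (hr : r ≠ 0) :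
    (ℤ × ℤ) × M ≃+ twistedMukaiLattice α r :=
  AddEquiv.ofBijective
    ((twistedMukaiMap α r).codRestrict _ fun p => range_twistedMukaiMap α r ▸ ⟨p, rfl⟩)
    ⟨fun p q h => twistedMukaiMap_injective α hr (congrArg Subtype.val h), by
      rintro ⟨_, hy⟩
      obtain ⟨p, rfl⟩ := (range_twistedMukaiMap α r).ge hy
      exact ⟨p, rfl⟩⟩

noncomputable def twistedMukaiBasis {ι : Type*} (α : M) {r : ℕ} (hr : r ≠ 0)
    (bM : Module.Basis ι ℤ M) :
    Module.Basis (Fin 2 ⊕ ι) ℤ (twistedMukaiLattice α r) :=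
  -- `Basis.prod` lives on `Prod.instModule`, whereas instance search finds
  -- `AddCommGroup.toIntModule` first.
  letI : Module ℤ ((ℤ × ℤ) × M) := Prod.instModule
  ((Module.Basis.finTwoProd ℤ).prod bM).map (twistedMukaiEquiv α hr).toIntLinearEquiv

theorem coe_twistedMukaiBasis {ι : Type*} (α : M) {r : ℕ} (hr : r ≠ 0) (bM : Module.Basis ι ℤ M)
    (k : Fin 2 ⊕ ι) :
    (twistedMukaiBasis α hr bM k : ℤ × M × ℤ)
      = Sum.elim ![((r : ℤ), α, 0), (0, 0, 1)] (fun i => (0, bM i, 0)) k := by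
  rcases k with k | i
  · fin_cases k <;> simp [twistedMukaiBasis, twistedMukaiEquiv, twistedMukaiMap]
  · simp [twistedMukaiBasis, twistedMukaiEquiv, twistedMukaiMap]

theorem gram_twistedMukaiBasis {ι : Type*} [Fintype ι] [DecidableEq ι] (α : M) {r : ℕ}
    (hr : r ≠ 0) (bM : Module.Basis ι ℤ M) (b : M →ₗ[ℤ] M →ₗ[ℤ] ℤ) :
    (Matrix.of fun k l => mukaiPairing b (twistedMukaiBasis α hr bM k : ℤ × M × ℤ)
        (twistedMukaiBasis α hr bM l))
      = fromBlocks !![b α α, -r; -r, 0] (of ![fun j => b α (bM j), 0])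
          (of fun i => ![b (bM i) α, 0]) (of fun i j => b (bM i) (bM j)) := by
  ext (k | i) (l | j)
  · fin_cases k <;> fin_cases l <;> simp [coe_twistedMukaiBasis, mukaiPairing]
  · fin_cases k <;> simp [coe_twistedMukaiBasis, mukaiPairing]
  · fin_cases l <;> simp [coe_twistedMukaiBasis, mukaiPairing]
  · simp [coe_twistedMukaiBasis, mukaiPairing]

end

theorem twistedMukaiLattice_disc_general
    {M : Type*} [AddCommGroup M] [Module ℤ M]
    (s : ℕ) (bM : Module.Basis (Fin s) ℤ M)
    (b : M →ₗ[ℤ] M →ₗ[ℤ] ℤ)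
    (α : M) (r : ℕ) (hr : 0 < r) :
    ∃ c : Module.Basis (Fin (s + 2)) ℤ (twistedMukaiLattice α r),
      (Matrix.of fun i j =>
          mukaiPairing b (c i : ℤ × M × ℤ) (c j : ℤ × M × ℤ)).det.natAbs
        = r ^ 2 * (Matrix.of fun i j => b (bM i) (bM j)).det.natAbs := by
  set c := twistedMukaiBasis α hr.ne' bM
  let e : Fin 2 ⊕ Fin s ≃ Fin (s + 2) := finSumFinEquiv.trans (finCongr (add_comm 2 s))
  refine ⟨c.reindex e, ?_⟩
  have hgram : (Matrix.of fun i j => mukaiPairing b (c.reindex e i : ℤ × M × ℤ) (c.reindex e j))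
      = (Matrix.of fun k l => mukaiPairing b (c k : ℤ × M × ℤ) (c l)).submatrix e.symm e.symm := by
    ext i j
    simp only [Module.Basis.reindex_apply, submatrix_apply, of_apply]
  rw [hgram, det_submatrix_equiv_self, gram_twistedMukaiBasis,
    det_fromBlocks_of_corner_eq_zero]
  simp [Int.natAbs_mul, sq]

/-- Let `M` be a free `ℤ`-module of rank `s` with a symmetric bilinear form
`b` of nonzero discriminant, `α ∈ M` and `r > 0`.  Then the lattice `N^{α/r}` of twisted
Mukai vectors is free of rank `s + 2`, and `|disc(N^{α/r})| = r² · |disc(M)|` for the Mukai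
pairing. -/
theorem twistedMukaiLattice_disc
    {M : Type*} [AddCommGroup M] [Module ℤ M]
    (s : ℕ) (bM : Module.Basis (Fin s) ℤ M)
    (b : M →ₗ[ℤ] M →ₗ[ℤ] ℤ)
    (hsymm : ∀ x y : M, b x y = b y x)
    (hdisc : (Matrix.of fun i j => b (bM i) (bM j)).det ≠ 0)
    (α : M) (r : ℕ) (hr : 0 < r) :
    ∃ c : Module.Basis (Fin (s + 2)) ℤ (twistedMukaiLattice α r),
      (Matrix.of fun i j =>
          mukaiPairing b (c i : ℤ × M × ℤ) (c j : ℤ × M × ℤ)).det.natAbs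
        = r ^ 2 * (Matrix.of fun i j => b (bM i) (bM j)).det.natAbs :=
  twistedMukaiLattice_disc_general s bM b α r hr
end
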